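/- Let σ: (ℂ^×)² → (ℂ^×)² be the involution σ(m,l) = (m^{-1}, l^{-1}). Suppose W ⊆ (ℂ^×)² is a σ-invariant set, and let P ∈ ℂ[m,l] generate the (principal) ideal of all polynomials in ℂ[m,l] vanishing on the Zariski closure of W in ℂ². Then P is balanced: σ(P) = δ m^a l^b P in ℂ[m^{±1}, l^{±1}] for some δ ∈ {±1} and integers a, b. -/

import Mathlib

/-!
Reflect `P` to `Q(x) = (∏ xᵢ)^N P(x⁻¹)`. Since `W` lies in the torus and is closed under
inversion, `Q` vanishes on `W`, so `Q = P c`. Reflecting this identity once more gives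
`c(x) c(x⁻¹) P(x) = P(x)`, hence `c · (reflection of c)` is a monomial. Thus `c` divides a
monomial, so `c = δ xᵐ`, and evaluating at `x = 1` gives `δ² = 1`.
-/

open MvPolynomial

namespace MvPolynomial

variable {σ R : Type*}

theorem eq_of_eval_eq_of_ne_zero [CommRing R] [IsDomain R] [Infinite R] {p q : MvPolynomial σ R}
    (h : ∀ x : σ → R, (∀ i, x i ≠ 0) → eval x p = eval x q) : p = q :=
  funext_set (fun _ ↦ {0}ᶜ) (fun _ ↦ (Set.finite_singleton 0).infinite_compl)
    fun x hx ↦ h x fun i ↦ hx i trivial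

variable [Fintype σ]

noncomputable def reflect [CommSemiring R] (N : ℕ) (p : MvPolynomial σ R) : MvPolynomial σ R :=
  ∑ d ∈ p.support, monomial (Finsupp.equivFunOnFinite.symm (fun _ ↦ N) - d) (coeff d p)

variable {K : Type*} [Field K]

theorem eval_reflect {N : ℕ} {p : MvPolynomial σ K} (hN : p.totalDegree ≤ N)
    {x : σ → K} (hx : ∀ i, x i ≠ 0) :
    eval x (reflect N p) = (∏ i, x i) ^ N * eval x⁻¹ p := by
  rw [reflect, map_sum, eval_eq', Finset.mul_sum]
  refine Finset.sum_congr rfl fun d hd ↦ ?_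
  have hdN : ∀ i, d i ≤ N := fun i ↦
    (monomial_le_degreeOf i hd).trans ((degreeOf_le_totalDegree p i).trans hN)
  simp only [eval_monomial, Finsupp.prod_fintype _ _ (fun i ↦ pow_zero _), Finsupp.tsub_apply,
    Finsupp.coe_equivFunOnFinite_symm, Pi.inv_apply, inv_pow, pow_sub₀ _ (hx _) (hdN _),
    ← Finset.prod_pow, Finset.prod_mul_distrib]
  ring

theorem eval_monomial_one_const (N : ℕ) (x : σ → K) :
    eval x (monomial (Finsupp.equivFunOnFinite.symm (fun _ ↦ N)) 1) = (∏ i, x i) ^ N := by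
  simp [eval_monomial, Finsupp.prod_fintype _ _ (fun i ↦ pow_zero _), Finset.prod_pow]

def IsBalanced (P : MvPolynomial σ K) : Prop :=
  ∃ δ : K, (δ = 1 ∨ δ = -1) ∧ ∃ a : σ → ℤ,
    ∀ x : σ → K, (∀ i, x i ≠ 0) → eval x⁻¹ P = δ * (∏ i, x i ^ a i) * eval x P

variable [Infinite K]

theorem mul_reflect_eq_monomial {N M : ℕ} {P c : MvPolynomial σ K} (hP : P ≠ 0)
    (hPN : P.totalDegree ≤ N) (hc : reflect N P = P * c) (hcM : c.totalDegree ≤ M) :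
    c * reflect M c = monomial (Finsupp.equivFunOnFinite.symm (fun _ ↦ M)) 1 := by
  refine mul_left_cancel₀ hP (eq_of_eval_eq_of_ne_zero fun x hx ↦ ?_)
  have hx' : ∀ i, x⁻¹ i ≠ 0 := fun i ↦ inv_ne_zero (hx i)
  have hπ : (∏ i, x i) ^ N * (∏ i, x⁻¹ i) ^ N = 1 := by
    rw [← mul_pow, ← Finset.prod_mul_distrib]
    simp [mul_inv_cancel₀ (hx _)]
  have e₁ := eval_reflect hPN hx
  have e₂ := eval_reflect hPN hx'
  rw [hc, map_mul] at e₁ e₂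
  rw [inv_inv] at e₂
  simp only [map_mul, eval_reflect hcM hx, eval_monomial_one_const]
  linear_combination (∏ i, x i) ^ M * eval x⁻¹ c * e₁ + (∏ i, x i) ^ M * (∏ i, x i) ^ N * e₂
    + (∏ i, x i) ^ M * eval x P * hπ

theorem isBalanced_of_dvd_reflect {N : ℕ} {P : MvPolynomial σ K} (hPN : P.totalDegree ≤ N)
    (hdvd : P ∣ reflect N P) : IsBalanced P := by
  rcases eq_or_ne P 0 with rfl | hP
  · exact ⟨1, Or.inl rfl, 0, fun x _ ↦ by simp⟩
  obtain ⟨c, hc⟩ := hdvd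
  have hmon := mul_reflect_eq_monomial hP hPN hc le_rfl
  obtain ⟨m, u, -, -, rfl⟩ := dvd_monomial_one_iff_exists.mp (Dvd.intro _ hmon)
  have hu2 : u * u = 1 := by
    have := congrArg (eval 1) hmon
    simpa [eval_reflect (x := 1) le_rfl fun _ ↦ one_ne_zero (α := K), eval_monomial_one_const,
      eval_monomial] using this
  refine ⟨u, mul_self_eq_one_iff.mp hu2, fun i ↦ (m i : ℤ) - N, fun x hx ↦ ?_⟩
  have e := eval_reflect hPN hx
  rw [hc, map_mul, eval_monomial, Finsupp.prod_fintype _ _ (fun i ↦ pow_zero _)] at e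
  have hπ : (∏ i, x i) ^ N ≠ 0 := pow_ne_zero _ (Finset.prod_ne_zero_iff.mpr fun i _ ↦ hx i)
  simp only [zpow_sub₀ (hx _), zpow_natCast, Finset.prod_div_distrib, Finset.prod_pow]
  field_simp
  linear_combination -e

theorem isBalanced_of_vanishing_generator {W : Set (σ → K)} (hW0 : ∀ x ∈ W, ∀ i, x i ≠ 0)
    (hWinv : ∀ x ∈ W, x⁻¹ ∈ W) {P : MvPolynomial σ K} (hPW : ∀ x ∈ W, eval x P = 0)
    (hmin : ∀ q : MvPolynomial σ K, (∀ x ∈ W, eval x q = 0) → P ∣ q) : IsBalanced P :=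
  isBalanced_of_dvd_reflect le_rfl <| hmin _ fun x hx ↦ by
    rw [eval_reflect le_rfl (hW0 x hx), hPW _ (hWinv x hx), mul_zero]

end MvPolynomial

/-- If W ⊆ (ℂ^×)² is invariant under σ(m,l) = (m⁻¹, l⁻¹) and P
generates the (principal) ideal of polynomials vanishing on the Zariski closure
of W (equivalently, on W), then P is balanced:
P(m⁻¹, l⁻¹) = δ m^a l^b P(m, l) for some δ = ±1 and integers a, b. -/
theorem stmt7 (W : Set (ℂ × ℂ))
    (hW0 : ∀ p ∈ W, p.1 ≠ 0 ∧ p.2 ≠ 0)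
    (hWσ : ∀ p ∈ W, (p.1⁻¹, p.2⁻¹) ∈ W)
    (P : MvPolynomial (Fin 2) ℂ)
    (hgen : ∀ q : MvPolynomial (Fin 2) ℂ,
      (∀ p ∈ W, eval ![p.1, p.2] q = 0) ↔ q ∈ Ideal.span {P}) :
    ∃ (δ : ℂ) (a b : ℤ), (δ = 1 ∨ δ = -1) ∧
      ∀ x y : ℂˣ, eval ![((x⁻¹ : ℂˣ) : ℂ), ((y⁻¹ : ℂˣ) : ℂ)] P
        = δ * (x : ℂ) ^ a * (y : ℂ) ^ b * eval ![(x : ℂ), (y : ℂ)] P := by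
  have hinv : ∀ u v : ℂ, (![u, v])⁻¹ = ![u⁻¹, v⁻¹] := fun u v ↦ by
    ext i; fin_cases i <;> rfl
  obtain ⟨δ, hδ, a, hP⟩ := isBalanced_of_vanishing_generator (W := (fun p ↦ ![p.1, p.2]) '' W)
    (by rintro _ ⟨p, hp, rfl⟩ i; fin_cases i <;> simp [hW0 p hp])
    (by rintro _ ⟨p, hp, rfl⟩; exact ⟨_, hWσ p hp, (hinv _ _).symm⟩)
    (by rintro _ ⟨p, hp, rfl⟩; exact (hgen P).mpr (Ideal.mem_span_singleton_self P) p hp)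
    (fun q hq ↦ Ideal.mem_span_singleton.mp ((hgen q).mp fun p hp ↦ hq _ ⟨p, hp, rfl⟩))
  refine ⟨δ, a 0, a 1, hδ, fun x y ↦ ?_⟩
  have := hP ![(x : ℂ), y] (by intro i; fin_cases i <;> simp)
  rw [hinv, Fin.prod_univ_two] at this
  rw [Units.val_inv_eq_inv_val, Units.val_inv_eq_inv_val, this]
  simp only [Matrix.cons_val_zero, Matrix.cons_val_one, mul_assoc]
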